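/- arXiv:1912.03921 — 2 statements merged into one kernel-verified Lean document; each statement's English description precedes it below -/
import Mathlib

section
/- Let σ be the logistic sigmoid, let c̄ ∈ [−1,1]^d with ‖c̄‖ = 1, let g : ℝ → ℝ be (p,C)-smooth with p ∈ (0,1], C > 0, let A ≥ 1, ρ > 0, n, K ∈ ℕ with K ≥ 2, and let b₁ < ⋯ < b_K satisfy b₁ ≤ −A√d, b_K ≥ A√d − 4A√d/(K−1), and A√d/((n+1)(K−1)) ≤ |b_{k+1} − b_k| ≤ 4A√d/(K−1) for all k. With a₀ = g(b₁) and a_k = g(b_k) − g(b_{k−1}), we have sup_{x ∈ [−A,A]^d} |a₀ + Σ_{k=1}^K a_k·σ(ρ·(c̄ᵀx − b_k)) − g(c̄ᵀx)| ≤ 3·(4A√d)^p·C/(K−1)^p + C·(4A√d)^p·(K−1)^{1−p}·exp(−ρ·A√d/((n+1)(K−1))). -/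
/-!
Put `u = c̄ᵀx`, so `|u| ≤ A√d` by Cauchy–Schwarz, and let `b m` be the last knot `≤ u`.
Replacing each `σ(ρ(u - b k))` by the step `𝟙[b k ≤ u]` turns the network into the telescoping
sum `a₀ + a₁ + ⋯ + a_m = g(b m)`, the piecewise constant interpolant, which is within `C δ^p` of
`g u` (`δ = 4A√d/(K-1)` bounds the knot gaps). Every `|a k| ≤ C δ^p`, and
`|σ(ρt) - 𝟙[t ≥ 0]| ≤ exp(-ρ|t|)`; since the knots are `ε`-separated, all knots except `b m` and
`b (m + 1)` are at distance `≥ ε` from `u`, so replacing sigmoids by steps costs at most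
`C δ^p (2 + (K - 1) e^{-ρε})`.
-/

open Finset Real

noncomputable def heaviside (t : ℝ) : ℝ := if 0 ≤ t then 1 else 0

lemma sigmoid_le_exp (x : ℝ) : sigmoid x ≤ exp x :=
  calc sigmoid x = sigmoid (-x) * exp x := by simpa using (sigmoid_mul_rexp_neg (-x)).symm
    _ ≤ exp x := mul_le_of_le_one_left (exp_pos x).le (sigmoid_le_one _)

lemma abs_sigmoid_mul_sub_heaviside_le (ρ t : ℝ) :
    |sigmoid (ρ * t) - heaviside t| ≤ exp (-(ρ * |t|)) := by
  unfold heaviside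
  split_ifs with ht
  · rw [abs_of_nonpos (by linarith [sigmoid_le_one (ρ * t)]), abs_of_nonneg ht, neg_sub,
      ← sigmoid_neg]
    exact sigmoid_le_exp _
  · rw [sub_zero, abs_of_pos (sigmoid_pos _), abs_of_neg (not_le.1 ht), mul_neg, neg_neg]
    exact sigmoid_le_exp _

lemma abs_sigmoid_sub_heaviside_le_one (s t : ℝ) : |sigmoid s - heaviside t| ≤ 1 := by
  have := sigmoid_pos s
  have := sigmoid_lt_one s
  unfold heaviside
  split_ifs <;> rw [abs_le] <;> constructor <;> linarith

lemma sum_le_two_add_of_le_off_pair {ι : Type*} [DecidableEq ι] {s : Finset ι} {w : ι → ℝ}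
    {i j : ι} {η : ℝ} (hi : i ∈ s) (hη : 0 ≤ η) (hw : ∀ k ∈ s, w k ≤ 1)
    (hfar : ∀ k ∈ s, k ≠ i → k ≠ j → w k ≤ η) :
    ∑ k ∈ s, w k ≤ 2 + (#s - 1 : ℝ) * η := by
  have hrest : ∀ k ∈ s.erase i, w k ≤ η + if k = j then 1 else 0 := by
    intro k hk
    obtain ⟨hki, hks⟩ := mem_erase.1 hk
    split_ifs with hkj
    · linarith [hw k hks]
    · simpa using hfar k hks hki hkj
  calc ∑ k ∈ s, w k = w i + ∑ k ∈ s.erase i, w k := (add_sum_erase s w hi).symm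
    _ ≤ 1 + ∑ k ∈ s.erase i, (η + if k = j then 1 else 0) :=
      add_le_add (hw i hi) (sum_le_sum hrest)
    _ ≤ 2 + (#s - 1 : ℝ) * η := by
      rw [sum_add_distrib, sum_const, card_erase_of_mem hi, nsmul_eq_mul,
        Nat.cast_pred (card_pos.2 ⟨i, hi⟩), sum_ite_eq']
      split_ifs <;> linarith

lemma abs_sub_le_mul_rpow_of_abs_sub_le {g : ℝ → ℝ} {C p δ x z : ℝ}
    (hg : ∀ x z : ℝ, |g x - g z| ≤ C * |x - z| ^ p) (hC : 0 ≤ C) (hp : 0 ≤ p)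
    (hxz : |x - z| ≤ δ) : |g x - g z| ≤ C * δ ^ p :=
  (hg x z).trans (mul_le_mul_of_nonneg_left (rpow_le_rpow (abs_nonneg _) hxz hp) hC)

lemma add_sum_Icc_eq_of_eq_sub {a F : ℕ → ℝ} {K : ℕ} (ha0 : a 0 = F 0)
    (ha : ∀ k, 1 ≤ k → k ≤ K → a k = F k - F (k - 1)) :
    ∀ m ≤ K, a 0 + ∑ k ∈ Icc 1 m, a k = F m
  | 0, _ => by simp [ha0]
  | m + 1, hm => by
    rw [sum_Icc_succ_top (by omega), ← add_assoc, add_sum_Icc_eq_of_eq_sub ha0 ha m (by omega),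
      ha (m + 1) (by omega) hm, Nat.add_sub_cancel, add_sub_cancel]

section Knots

/- In the lemmas below, `hm`, `hbm` and `hum` say that `u` lies in the cell `[b m, b (m + 1))`
of the knots `b 1 ≤ ⋯ ≤ b K`, the last cell being unbounded. -/

variable {b : ℕ → ℝ} {K m : ℕ} {u : ℝ}

lemma monotoneOn_Icc_of_le_sub {ε : ℝ} (hε : 0 ≤ ε)
    (hsep : ∀ k, 1 ≤ k → k < K → ε ≤ b (k + 1) - b k) : MonotoneOn b (Set.Icc 1 K) :=
  monotoneOn_of_le_succ Set.ordConnected_Icc fun k _ hk hk1 => by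
    rw [Order.succ_eq_add_one] at hk1 ⊢
    linarith [hsep k hk.1 (by simp only [Set.mem_Icc] at hk1; omega)]

lemma abs_sub_pred_le {ε δ : ℝ} (hε : 0 ≤ ε) (hsep : ∀ k, 1 ≤ k → k < K → ε ≤ b (k + 1) - b k)
    (hgap : ∀ k, 1 ≤ k → k < K → b (k + 1) - b k ≤ δ) (hb0 : b 0 = b 1) (hδ : 0 ≤ δ)
    {k : ℕ} (hk1 : 1 ≤ k) (hkK : k ≤ K) : |b k - b (k - 1)| ≤ δ := by
  obtain ⟨j, rfl⟩ : ∃ j, k = j + 1 := ⟨k - 1, by omega⟩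
  rcases Nat.eq_zero_or_pos j with rfl | hj
  · simpa [hb0] using hδ
  · rw [Nat.add_sub_cancel, abs_of_nonneg (by linarith [hsep j hj (by omega)])]
    exact hgap j hj (by omega)

lemma heaviside_sub_eq_ite (hb : MonotoneOn b (Set.Icc 1 K)) (hm : m ∈ Icc 1 K)
    (hbm : b m ≤ u) (hum : m < K → u < b (m + 1)) {k : ℕ} (hk : k ∈ Icc 1 K) :
    heaviside (u - b k) = if k ≤ m then 1 else 0 := by
  rw [mem_Icc] at hm hk
  unfold heaviside
  by_cases hkm : k ≤ m
  · rw [if_pos (sub_nonneg.2 ((hb ⟨hk.1, hk.2⟩ ⟨hm.1, hm.2⟩ hkm).trans hbm)), if_pos hkm]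
  · have : u < b k :=
      (hum (by omega)).trans_le (hb ⟨by omega, by omega⟩ ⟨hk.1, hk.2⟩ (by omega))
    rw [if_neg (by linarith), if_neg hkm]

lemma le_abs_sub_of_ne {ε : ℝ} (hsep : ∀ k, 1 ≤ k → k < K → ε ≤ b (k + 1) - b k)
    (hb : MonotoneOn b (Set.Icc 1 K)) (hm : m ∈ Icc 1 K) (hbm : b m ≤ u)
    (hum : m < K → u < b (m + 1)) {k : ℕ} (hk : k ∈ Icc 1 K) (hkm : k ≠ m)
    (hkm' : k ≠ m + 1) : ε ≤ |u - b k| := by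
  rw [mem_Icc] at hm hk
  rcases lt_or_gt_of_ne hkm with hlt | hgt
  · have := hb ⟨by omega, by omega⟩ ⟨hm.1, hm.2⟩ (show k + 1 ≤ m by omega)
    linarith [hsep k hk.1 (by omega), le_abs_self (u - b k)]
  · obtain ⟨j, rfl⟩ : ∃ j, k = j + 1 := ⟨k - 1, by omega⟩
    have := hb ⟨by omega, by omega⟩ ⟨by omega, by omega⟩ (show m + 1 ≤ j by omega)
    linarith [hsep j (by omega) (by omega), hum (by omega), neg_abs_le (u - b (j + 1))]

lemma abs_sum_sigmoid_sub_sum_heaviside_le {a : ℕ → ℝ} {ρ ε M : ℝ} (hρ : 0 ≤ ρ) (hM : 0 ≤ M)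
    (hsep : ∀ k, 1 ≤ k → k < K → ε ≤ b (k + 1) - b k) (hb : MonotoneOn b (Set.Icc 1 K))
    (hm : m ∈ Icc 1 K) (hbm : b m ≤ u) (hum : m < K → u < b (m + 1))
    (ha : ∀ k ∈ Icc 1 K, |a k| ≤ M) :
    |∑ k ∈ Icc 1 K, a k * sigmoid (ρ * (u - b k)) - ∑ k ∈ Icc 1 K, a k * heaviside (u - b k)|
      ≤ M * (2 + (K - 1) * exp (-(ρ * ε))) := by
  have hfar : ∀ k ∈ Icc 1 K, k ≠ m → k ≠ m + 1 →
      |sigmoid (ρ * (u - b k)) - heaviside (u - b k)| ≤ exp (-(ρ * ε)) := fun k hk h h' =>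
    (abs_sigmoid_mul_sub_heaviside_le ρ _).trans <| exp_le_exp.2 <| neg_le_neg <|
      mul_le_mul_of_nonneg_left (le_abs_sub_of_ne hsep hb hm hbm hum hk h h') hρ
  have hweights := sum_le_two_add_of_le_off_pair hm (exp_pos _).le
    (fun k _ => abs_sigmoid_sub_heaviside_le_one _ _) hfar
  rw [Nat.card_Icc, Nat.add_sub_cancel] at hweights
  rw [← sum_sub_distrib]
  calc _ ≤ ∑ k ∈ Icc 1 K, |a k * sigmoid (ρ * (u - b k)) - a k * heaviside (u - b k)| :=
        abs_sum_le_sum_abs _ _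
    _ = ∑ k ∈ Icc 1 K, |a k| * |sigmoid (ρ * (u - b k)) - heaviside (u - b k)| := by
        simp_rw [← mul_sub, abs_mul]
    _ ≤ ∑ k ∈ Icc 1 K, M * |sigmoid (ρ * (u - b k)) - heaviside (u - b k)| :=
        sum_le_sum fun k hk => mul_le_mul_of_nonneg_right (ha k hk) (abs_nonneg _)
    _ ≤ M * (2 + (K - 1) * exp (-(ρ * ε))) := by
        rw [← mul_sum]
        exact mul_le_mul_of_nonneg_left hweights hM

lemma add_sum_mul_heaviside_eq {a : ℕ → ℝ} {g : ℝ → ℝ} (ha0 : a 0 = g (b 0))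
    (ha : ∀ k, 1 ≤ k → k ≤ K → a k = g (b k) - g (b (k - 1)))
    (hb : MonotoneOn b (Set.Icc 1 K)) (hm : m ∈ Icc 1 K) (hbm : b m ≤ u)
    (hum : m < K → u < b (m + 1)) :
    a 0 + ∑ k ∈ Icc 1 K, a k * heaviside (u - b k) = g (b m) := by
  have hsum : ∑ k ∈ Icc 1 K, a k * heaviside (u - b k) = ∑ k ∈ Icc 1 m, a k := by
    rw [sum_congr rfl fun k hk => by rw [heaviside_sub_eq_ite hb hm hbm hum hk, mul_ite,
      mul_one, mul_zero], ← sum_filter]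
    congr 1
    ext k
    simp only [mem_filter, mem_Icc] at hm ⊢
    omega
  rw [hsum]
  exact add_sum_Icc_eq_of_eq_sub (F := g ∘ b) ha0 ha m (mem_Icc.1 hm).2

end Knots

theorem abs_add_sum_mul_sigmoid_sub_le {g : ℝ → ℝ} {a b : ℕ → ℝ} {K : ℕ} {C p ρ ε δ u : ℝ}
    (hg : ∀ x z : ℝ, |g x - g z| ≤ C * |x - z| ^ p) (hC : 0 ≤ C) (hp : 0 ≤ p) (hρ : 0 ≤ ρ)
    (hε : 0 ≤ ε) (hsep : ∀ k, 1 ≤ k → k < K → ε ≤ b (k + 1) - b k)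
    (hgap : ∀ k, 1 ≤ k → k < K → b (k + 1) - b k ≤ δ) (hb0 : b 0 = b 1)
    (ha0 : a 0 = g (b 0)) (ha : ∀ k, 1 ≤ k → k ≤ K → a k = g (b k) - g (b (k - 1)))
    (hK : 1 ≤ K) (hbu : b 1 ≤ u) (hub : u ≤ b K + δ) :
    |a 0 + ∑ k ∈ Icc 1 K, a k * sigmoid (ρ * (u - b k)) - g u|
      ≤ 3 * (C * δ ^ p) + (K - 1) * (C * δ ^ p * exp (-(ρ * ε))) := by
  have hb := monotoneOn_Icc_of_le_sub hε hsep
  set m := Nat.findGreatest (fun k => b k ≤ u) K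
  have hm : m ∈ Icc 1 K := mem_Icc.2 ⟨Nat.le_findGreatest hK hbu, Nat.findGreatest_le K⟩
  have hbm : b m ≤ u := Nat.findGreatest_spec (P := fun k => b k ≤ u) hK hbu
  have hum : m < K → u < b (m + 1) :=
    fun h => not_le.1 (Nat.findGreatest_is_greatest (Nat.lt_succ_self m) h)
  have hcell : |b m - u| ≤ δ := by
    rw [abs_sub_comm, abs_of_nonneg (sub_nonneg.2 hbm)]
    rcases (mem_Icc.1 hm).2.lt_or_eq with hmK | hmK
    · linarith [hum hmK, hgap m (mem_Icc.1 hm).1 hmK]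
    · rw [hmK] at hbm ⊢
      linarith
  have hδ : 0 ≤ δ := (abs_nonneg _).trans hcell
  have hcoef : ∀ k ∈ Icc 1 K, |a k| ≤ C * δ ^ p := by
    intro k hk
    obtain ⟨hk1, hkK⟩ := mem_Icc.1 hk
    rw [ha k hk1 hkK]
    exact abs_sub_le_mul_rpow_of_abs_sub_le hg hC hp (abs_sub_pred_le hε hsep hgap hb0 hδ hk1 hkK)
  have hsig := abs_sum_sigmoid_sub_sum_heaviside_le hρ (mul_nonneg hC (rpow_nonneg hδ p))
    hsep hb hm hbm hum hcoef
  have hstep := add_sum_mul_heaviside_eq ha0 ha hb hm hbm hum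
  have hinterp := abs_sub_le_mul_rpow_of_abs_sub_le hg hC hp hcell
  calc _ = |(∑ k ∈ Icc 1 K, a k * sigmoid (ρ * (u - b k))
          - ∑ k ∈ Icc 1 K, a k * heaviside (u - b k)) + (g (b m) - g u)| := by
        rw [← hstep]
        congr 1
        ring
    _ ≤ C * δ ^ p * (2 + (K - 1) * exp (-(ρ * ε))) + C * δ ^ p :=
        (abs_add_le _ _).trans (add_le_add hsig hinterp)
    _ = _ := by ring

lemma abs_sum_mul_le_mul_sqrt_card {ι : Type*} [Fintype ι] {c x : ι → ℝ} {A : ℝ} (hA : 0 ≤ A)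
    (hc : √(∑ j, c j ^ 2) = 1) (hx : ∀ j, |x j| ≤ A) :
    |∑ j, c j * x j| ≤ A * √(Fintype.card ι) := by
  have hx2 : ∑ j, |x j| ^ 2 ≤ Fintype.card ι * A ^ 2 := by
    simpa using sum_le_card_nsmul univ (fun j => |x j| ^ 2) (A ^ 2)
      fun j _ => pow_le_pow_left₀ (abs_nonneg _) (hx j) 2
  calc |∑ j, c j * x j| ≤ ∑ j, |c j| * |x j| := by
        simpa only [abs_mul] using abs_sum_le_sum_abs (fun j => c j * x j) univ
    _ ≤ √(∑ j, |c j| ^ 2) * √(∑ j, |x j| ^ 2) := sum_mul_le_sqrt_mul_sqrt _ _ _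
    _ ≤ √(Fintype.card ι * A ^ 2) := by
        simp only [sq_abs, hc, one_mul]
        exact sqrt_le_sqrt (by simpa only [sq_abs] using hx2)
    _ = A * √(Fintype.card ι) := by rw [sqrt_mul (Nat.cast_nonneg _), sqrt_sq hA, mul_comm]

open Finset Real in
theorem network_approx_holder_general
    (d : ℕ) (A : ℝ) (hA : 1 ≤ A)
    (c : Fin d → ℝ)
    (hcnorm : Real.sqrt (∑ j : Fin d, (c j) ^ 2) = 1)
    (g : ℝ → ℝ) (p C : ℝ) (hp : 0 < p) (hC : 0 < C)
    (hg : ∀ x z : ℝ, |g x - g z| ≤ C * |x - z| ^ p)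
    (ρ : ℝ) (hρ : 0 < ρ) (n K : ℕ) (hK : 2 ≤ K)
    (b : ℕ → ℝ)
    (hb0 : b 0 = b 1)
    (hmono : ∀ k, 1 ≤ k → k < K → b k < b (k + 1))
    (hb1 : b 1 ≤ -A * Real.sqrt d)
    (hbK : b K ≥ A * Real.sqrt d - 4 * A * Real.sqrt d / (K - 1))
    (hgaplo : ∀ k, 1 ≤ k → k ≤ K - 1 →
      A * Real.sqrt d / ((n + 1) * (K - 1)) ≤ |b (k + 1) - b k|)
    (hgaphi : ∀ k, 1 ≤ k → k ≤ K - 1 →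
      |b (k + 1) - b k| ≤ 4 * A * Real.sqrt d / (K - 1))
    (a : ℕ → ℝ)
    (ha0 : a 0 = g (b 1))
    (ha : ∀ k, 1 ≤ k → k ≤ K → a k = g (b k) - g (b (k - 1)))
    (x : Fin d → ℝ) (hx : ∀ j, |x j| ≤ A) :
    |a 0 + (∑ k ∈ Finset.Icc 1 K,
        a k * (1 / (1 + Real.exp (-(ρ * ((∑ j : Fin d, c j * x j) - b k))))))
      - g (∑ j : Fin d, c j * x j)|
      ≤ 3 * (4 * A * Real.sqrt d) ^ p * C / ((K : ℝ) - 1) ^ p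
        + C * (4 * A * Real.sqrt d) ^ p * ((K : ℝ) - 1) ^ (1 - p)
          * Real.exp (-(ρ * (A * Real.sqrt d) / ((n + 1) * (K - 1)))) := by
  have hK1 : (0 : ℝ) < K - 1 := sub_pos.2 (Nat.one_lt_cast.2 hK)
  have hu := abs_le.1 <| by
    simpa using abs_sum_mul_le_mul_sqrt_card (by linarith : (0 : ℝ) ≤ A) hcnorm hx
  have habs_gap (k : ℕ) (hk1 : 1 ≤ k) (hkK : k < K) : |b (k + 1) - b k| = b (k + 1) - b k :=
    abs_of_pos (sub_pos.2 (hmono k hk1 hkK))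
  have key := abs_add_sum_mul_sigmoid_sub_le (u := ∑ j, c j * x j) hg hC.le hp.le hρ.le
    (by positivity) (fun k hk1 hkK => habs_gap k hk1 hkK ▸ hgaplo k hk1 (by omega))
    (fun k hk1 hkK => habs_gap k hk1 hkK ▸ hgaphi k hk1 (by omega)) hb0 (hb0 ▸ ha0) ha
    (by omega) (by linarith) (by linarith)
  simp only [one_div, ← sigmoid_def]
  refine key.trans (le_of_eq ?_)
  rw [div_rpow (by positivity) hK1.le, rpow_sub hK1, rpow_one, mul_div_assoc]
  field_simp

open Finset Real in
theorem network_approx_holder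
    (d : ℕ) (A : ℝ) (hA : 1 ≤ A)
    (c : Fin d → ℝ) (hc1 : ∀ j, |c j| ≤ 1)
    (hcnorm : Real.sqrt (∑ j : Fin d, (c j) ^ 2) = 1)
    (g : ℝ → ℝ) (p C : ℝ) (hp : 0 < p) (hp1 : p ≤ 1) (hC : 0 < C)
    (hg : ∀ x z : ℝ, |g x - g z| ≤ C * |x - z| ^ p)
    (ρ : ℝ) (hρ : 0 < ρ) (n K : ℕ) (hK : 2 ≤ K)
    (b : ℕ → ℝ)
    (hb0 : b 0 = b 1)
    (hmono : ∀ k, 1 ≤ k → k < K → b k < b (k + 1))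
    (hb1 : b 1 ≤ -A * Real.sqrt d)
    (hbK : b K ≥ A * Real.sqrt d - 4 * A * Real.sqrt d / (K - 1))
    (hgaplo : ∀ k, 1 ≤ k → k ≤ K - 1 →
      A * Real.sqrt d / ((n + 1) * (K - 1)) ≤ |b (k + 1) - b k|)
    (hgaphi : ∀ k, 1 ≤ k → k ≤ K - 1 →
      |b (k + 1) - b k| ≤ 4 * A * Real.sqrt d / (K - 1))
    (a : ℕ → ℝ)
    (ha0 : a 0 = g (b 1))
    (ha : ∀ k, 1 ≤ k → k ≤ K → a k = g (b k) - g (b (k - 1)))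
    (x : Fin d → ℝ) (hx : ∀ j, |x j| ≤ A) :
    |a 0 + (∑ k ∈ Finset.Icc 1 K,
        a k * (1 / (1 + Real.exp (-(ρ * ((∑ j : Fin d, c j * x j) - b k))))))
      - g (∑ j : Fin d, c j * x j)|
      ≤ 3 * (4 * A * Real.sqrt d) ^ p * C / ((K : ℝ) - 1) ^ p
        + C * (4 * A * Real.sqrt d) ^ p * ((K : ℝ) - 1) ^ (1 - p)
          * Real.exp (-(ρ * (A * Real.sqrt d) / ((n + 1) * (K - 1)))) :=
  network_approx_holder_general d A hA c hcnorm g p C hp hC hg ρ hρ n K hK b hb0 hmono hb1 hbK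
    hgaplo hgaphi a ha0 ha x hx
end

section
/- Consider gradient descent (a^{(t+1)}, b^{(t+1)}) = (a^{(t)}, b^{(t)}) − λ·∇F(a^{(t)}, b^{(t)}) on the penalized risk F of a one-hidden-layer logistic network. Assume for all t ∈ {0,…,T−1}: F(a^{(t)}, b^{(t)}) ≤ c₅, ‖a^{(t)}‖² ≤ c₆·n, the initial inner weights satisfy min_{i,k} |Σ_j b_{k,j}^{(0)} x_i^{(j)} + b_{k,0}^{(0)}| ≥ δ > 0, and (d+1)·T·λ·2√c₅·max{1, max_{i,l}|x_i^{(l)}|²}·√(c₆n)·exp(−δ/2) ≤ δ/2. Then for every k, every j ∈ {0,…,d}, and every t ∈ {1,…,T}, |b_{k,j}^{(t)} − b_{k,j}^{(t−1)}| ≤ λ·2√c₅·max{1, max_{i,l}|x_i^{(l)}|}·√(c₆n)·exp(−δ/2). -/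
/-!
A gradient step moves `b_{k,j}` by `λ |∂F/∂b_{k,j}|`, and the partial derivative is bounded by
`2 √F · max(1, |x|) · |a_{k+1}| · σ'(z)` with `σ' = σ (1 - σ) ≤ exp (-|z|)`, where `z` is the
preactivation of neuron `k`. So as long as every preactivation has absolute value at least `δ/2`,
each step moves every inner weight by at most the claimed amount, hence every preactivation by at
most `(d + 1) max(1, |x|)` times that. The smallness assumption makes `T` such moves add up to at
most `δ/2`, so by induction on `t` the preactivations, which start at distance `≥ δ` from `0`, stay
at distance `≥ δ/2` up to time `T`.
-/
open Finset Real

namespace Real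

lemma sigmoid_le_exp (x : ℝ) : sigmoid x ≤ exp x := by
  rw [sigmoid_def, inv_le_iff_one_le_mul₀ (by positivity), mul_add, ← exp_add]
  simp [(exp_pos x).le]

lemma sigmoid_mul_one_sub_le_exp_neg_abs (x : ℝ) :
    sigmoid x * (1 - sigmoid x) ≤ exp (-|x|) := by
  rw [← sigmoid_neg]
  refine le_trans ?_ (sigmoid_le_exp (-|x|))
  rcases le_total 0 x with hx | hx
  · rw [abs_of_nonneg hx]
    exact mul_le_of_le_one_left (sigmoid_nonneg _) (sigmoid_le_one x)
  · rw [abs_of_nonpos hx, neg_neg]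
    exact mul_le_of_le_one_right (sigmoid_nonneg _) (sigmoid_le_one _)

end Real

def preactivation {d : ℕ} (x : Fin d → ℝ) : (ℕ → ℝ) →ₗ[ℝ] ℝ where
  toFun w := ∑ j : Fin d, w (j + 1) * x j + w 0
  map_add' v w := by simp only [Pi.add_apply, add_mul, sum_add_distrib]; ring
  map_smul' c w := by
    simp only [Pi.smul_apply, smul_eq_mul, mul_assoc, ← mul_sum, RingHom.id_apply]; ring

lemma preactivation_apply {d : ℕ} (x : Fin d → ℝ) (w : ℕ → ℝ) :
    preactivation x w = ∑ j : Fin d, w (j + 1) * x j + w 0 := rfl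

lemma hasDerivAt_preactivation_update {d : ℕ} (x : Fin d → ℝ) (w : ℕ → ℝ) (j : ℕ) (s : ℝ) :
    HasDerivAt (fun s => preactivation x (Function.update w j s))
      (preactivation x (Pi.single j 1)) s := by
  have h : ∀ s, Function.update w j s = w + (s - w j) • Pi.single j 1 := fun s => by
    ext i; by_cases hi : i = j <;> simp [hi]
  simp_rw [h, map_add, map_smul, smul_eq_mul]
  simpa using (((hasDerivAt_id s).sub_const (w j)).mul_const
    (preactivation x (Pi.single j 1))).const_add (preactivation x w)

lemma abs_preactivation_single_le {d : ℕ} {x : Fin d → ℝ} {M : ℝ} (hM : 1 ≤ M)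
    (hx : ∀ l, |x l| ≤ M) (j : ℕ) : |preactivation x (Pi.single j 1)| ≤ M := by
  rcases j with _ | m
  · simpa [preactivation_apply] using hM
  have hsum : preactivation x (Pi.single (m + 1) 1) =
      ∑ l : Fin d, if (l : ℕ) = m then x l else 0 := by
    simp [preactivation_apply, Pi.single_apply]
  rw [hsum]
  by_cases hm : m < d
  · rw [sum_eq_single_of_mem ⟨m, hm⟩ (mem_univ _) fun l _ hl => if_neg fun h => hl (Fin.ext h)]
    simpa using hx ⟨m, hm⟩
  · rw [sum_eq_zero fun l _ => if_neg (by omega)]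
    simpa using zero_le_one.trans hM

lemma abs_preactivation_le {d : ℕ} {x : Fin d → ℝ} {w : ℕ → ℝ} {M S : ℝ} (hM : 1 ≤ M)
    (hx : ∀ l, |x l| ≤ M) (hw : ∀ j ≤ d, |w j| ≤ S) :
    |preactivation x w| ≤ (d + 1) * M * S := by
  have hS : 0 ≤ S := (abs_nonneg _).trans (hw 0 (Nat.zero_le d))
  calc |preactivation x w| ≤ ∑ l : Fin d, |w (l + 1)| * |x l| + |w 0| := by
        rw [preactivation_apply]
        refine (abs_add_le _ _).trans ?_
        gcongr
        simpa only [abs_mul] using abs_sum_le_sum_abs (fun l : Fin d => w (l + 1) * x l) univ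
    _ ≤ ∑ _l : Fin d, S * M + S := by
        gcongr with l
        · exact hw _ (by omega)
        · exact hx l
        · exact hw 0 (Nat.zero_le d)
    _ ≤ (d + 1) * M * S := by
        rw [sum_const, card_univ, Fintype.card_fin, nsmul_eq_mul]
        nlinarith

noncomputable def logisticNetwork {d K : ℕ} (x : Fin d → ℝ) (a : ℕ → ℝ) (b : Fin K → ℕ → ℝ) :
    ℝ :=
  ∑ k : Fin K, a (k + 1) * sigmoid (preactivation x (b k)) + a 0

lemma logisticNetwork_update {d K : ℕ} (x : Fin d → ℝ) (a : ℕ → ℝ) (b : Fin K → ℕ → ℝ)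
    (k : Fin K) (v : ℕ → ℝ) : logisticNetwork x a (Function.update b k v) = logisticNetwork x a b
      + a (k + 1) * (sigmoid (preactivation x v) - sigmoid (preactivation x (b k))) := by
  have hrest :
      ∑ k' ∈ univ.erase k, a (k' + 1) * sigmoid (preactivation x (Function.update b k v k'))
      = ∑ k' ∈ univ.erase k, a (k' + 1) * sigmoid (preactivation x (b k')) :=
    sum_congr rfl fun k' hk' => by rw [Function.update_of_ne (ne_of_mem_erase hk')]
  rw [logisticNetwork, logisticNetwork, ← add_sum_erase _ _ (mem_univ k),
    ← add_sum_erase _ _ (mem_univ k), Function.update_self, hrest]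
  ring

lemma hasDerivAt_logisticNetwork_update {d K : ℕ} (x : Fin d → ℝ) (a : ℕ → ℝ)
    (b : Fin K → ℕ → ℝ) (k : Fin K) (j : ℕ) (s : ℝ) :
    HasDerivAt (fun s => logisticNetwork x a (Function.update b k (Function.update (b k) j s)))
      (a (k + 1) * (sigmoid (preactivation x (Function.update (b k) j s))
        * (1 - sigmoid (preactivation x (Function.update (b k) j s))))
        * preactivation x (Pi.single j 1)) s := by
  simp only [logisticNetwork_update]
  have hσ := (hasDerivAt_sigmoid _).comp s (hasDerivAt_preactivation_update x (b k) j s)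
  simpa [mul_assoc] using ((hσ.sub_const _).const_mul (a (k + 1))).const_add (logisticNetwork x a b)

lemma abs_le_sqrt_of_sum_sq_le {ι : Type*} {s : Finset ι} {f : ι → ℝ} {i : ι} {C : ℝ}
    (hi : i ∈ s) (h : ∑ j ∈ s, f j ^ 2 ≤ C) : |f i| ≤ √C :=
  Real.abs_le_sqrt ((single_le_sum (fun j _ => sq_nonneg (f j)) hi).trans h)

lemma mean_abs_le_sqrt_mean_sq {n : ℕ} (u : Fin n → ℝ) :
    (1 / n) * ∑ i, |u i| ≤ √((1 / n) * ∑ i, u i ^ 2) := by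
  have h := sum_div_card_sq_le_sum_sq_div_card (s := univ) (f := fun i => |u i|)
  simp only [sq_abs, card_univ, Fintype.card_fin] at h
  rw [one_div_mul_eq_div, one_div_mul_eq_div]
  exact (le_abs_self _).trans (Real.abs_le_sqrt h)

lemma abs_mean_mul_le {n : ℕ} (u v : Fin n → ℝ) {B : ℝ} (hv : ∀ i, |v i| ≤ B) :
    |(1 / n) * ∑ i, u i * v i| ≤ √((1 / n) * ∑ i, u i ^ 2) * B := by
  rcases isEmpty_or_nonempty (Fin n) with hn | ⟨⟨i₀⟩⟩
  · simp
  have hB : 0 ≤ B := (abs_nonneg _).trans (hv i₀)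
  calc |(1 / n) * ∑ i, u i * v i| ≤ (1 / n) * ∑ i, |u i| * B := by
        rw [abs_mul, abs_of_nonneg (by positivity)]
        gcongr
        refine (abs_sum_le_sum_abs _ _).trans (sum_le_sum fun i _ => ?_)
        rw [abs_mul]
        gcongr
        exact hv i
    _ = ((1 / n) * ∑ i, |u i|) * B := by rw [← sum_mul, mul_assoc]
    _ ≤ √((1 / n) * ∑ i, u i ^ 2) * B := by gcongr; exact mean_abs_le_sqrt_mean_sq u

noncomputable def penalizedRisk {n d K : ℕ} (x : Fin n → Fin d → ℝ) (y : Fin n → ℝ) (c₁ : ℝ)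
    (a : ℕ → ℝ) (b : Fin K → ℕ → ℝ) : ℝ :=
  (1 / n) * ∑ i, (logisticNetwork (x i) a b - y i) ^ 2 + (c₁ / n) * ∑ k ∈ range (K + 1), a k ^ 2

lemma abs_deriv_penalizedRisk_le {n d K : ℕ} {x : Fin n → Fin d → ℝ} {y : Fin n → ℝ} {c₁ : ℝ}
    (hc₁ : 0 ≤ c₁) {a : ℕ → ℝ} {b : Fin K → ℕ → ℝ} {k : Fin K} (j : ℕ) {M r : ℝ} (hM : 1 ≤ M)
    (hx : ∀ i l, |x i l| ≤ M) (hr : ∀ i, r ≤ |preactivation (x i) (b k)|) :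
    |deriv (fun s => penalizedRisk x y c₁ a (Function.update b k (Function.update (b k) j s)))
        (b k j)| ≤ 2 * √(penalizedRisk x y c₁ a b) * M * |a (k + 1)| * exp (-r) := by
  set residual : Fin n → ℝ := fun i => logisticNetwork (x i) a b - y i
  set grad : Fin n → ℝ := fun i => a (k + 1) * (sigmoid (preactivation (x i) (b k))
    * (1 - sigmoid (preactivation (x i) (b k)))) * preactivation (x i) (Pi.single j 1)
  have hres : ∀ i, HasDerivAt
      (fun s => logisticNetwork (x i) a (Function.update b k (Function.update (b k) j s)) - y i)
      (grad i) (b k j) := fun i => by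
    simpa using (hasDerivAt_logisticNetwork_update (x i) a b k j (b k j)).sub_const (y i)
  have hrisk : HasDerivAt
      (fun s => penalizedRisk x y c₁ a (Function.update b k (Function.update (b k) j s)))
      ((1 / n) * ∑ i, residual i * (2 * grad i)) (b k j) := by
    refine (((HasDerivAt.fun_sum (u := univ) fun i _ => (hres i).pow 2).const_mul
      (1 / (n : ℝ))).add_const ((c₁ / n) * ∑ k ∈ range (K + 1), a k ^ 2)).congr_deriv ?_
    simp [residual, mul_comm, mul_assoc]
  have hgrad : ∀ i, |2 * grad i| ≤ 2 * (M * |a (k + 1)| * exp (-r)) := fun i => by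
    have hσ := (sigmoid_mul_one_sub_le_exp_neg_abs (preactivation (x i) (b k))).trans
      (exp_le_exp.mpr (neg_le_neg (hr i)))
    rw [abs_mul, abs_two, abs_mul, abs_mul, abs_of_nonneg (mul_nonneg (sigmoid_nonneg _)
      (sub_nonneg.mpr (sigmoid_le_one _)))]
    have := abs_preactivation_single_le hM (hx i) j
    calc 2 * (|a (k + 1)| * _ * |preactivation (x i) (Pi.single j 1)|)
        ≤ 2 * (|a (k + 1)| * exp (-r) * M) := by gcongr
      _ = 2 * (M * |a (k + 1)| * exp (-r)) := by ring
  have hpen : 0 ≤ (c₁ / n) * ∑ k ∈ range (K + 1), a k ^ 2 := by positivity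
  rw [hrisk.deriv]
  calc _ ≤ √((1 / n) * ∑ i, residual i ^ 2) * (2 * (M * |a (k + 1)| * exp (-r))) :=
        abs_mean_mul_le residual _ hgrad
    _ ≤ √(penalizedRisk x y c₁ a b) * (2 * (M * |a (k + 1)| * exp (-r))) := by
        gcongr
        exact le_add_of_nonneg_right hpen
    _ = 2 * √(penalizedRisk x y c₁ a b) * M * |a (k + 1)| * exp (-r) := by ring

lemma abs_mul_deriv_penalizedRisk_le {n d K : ℕ} {x : Fin n → Fin d → ℝ} {y : Fin n → ℝ}
    {c₁ : ℝ} (hc₁ : 0 ≤ c₁) {a : ℕ → ℝ} {b : Fin K → ℕ → ℝ} {k : Fin K} (j : ℕ)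
    {lam M r c₅ C : ℝ} (hlam : 0 ≤ lam) (hM : 1 ≤ M) (hx : ∀ i l, |x i l| ≤ M)
    (hr : ∀ i, r ≤ |preactivation (x i) (b k)|) (hF : penalizedRisk x y c₁ a b ≤ c₅)
    (ha : ∑ k ∈ range (K + 1), a k ^ 2 ≤ C) :
    |lam * deriv (fun s => penalizedRisk x y c₁ a (Function.update b k (Function.update (b k) j s)))
        (b k j)| ≤ lam * 2 * √c₅ * M * √C * exp (-r) := by
  have hak := abs_le_sqrt_of_sum_sq_le (mem_range.mpr (by omega : (k : ℕ) + 1 < K + 1)) ha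
  rw [abs_mul, abs_of_nonneg hlam]
  calc _ ≤ lam * (2 * √(penalizedRisk x y c₁ a b) * M * |a (k + 1)| * exp (-r)) := by
        gcongr
        exact abs_deriv_penalizedRisk_le hc₁ j hM hx hr
    _ ≤ lam * (2 * √c₅ * M * √C * exp (-r)) := by gcongr
    _ = lam * 2 * √c₅ * M * √C * exp (-r) := by ring

lemma abs_ge_half_of_small_steps {ι : Type*} {z : ℕ → ι → ℝ} {δ c : ℝ} {T : ℕ} (hc : 0 ≤ c)
    (hTc : T * c ≤ δ / 2) (h₀ : ∀ i, δ ≤ |z 0 i|)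
    (hstep : ∀ t < T, (∀ i, δ / 2 ≤ |z t i|) → ∀ i, |z (t + 1) i - z t i| ≤ c) :
    ∀ t ≤ T, ∀ i, δ / 2 ≤ |z t i| := by
  have hhalf : ∀ t ≤ T, δ / 2 ≤ δ - t * c := fun t ht => by
    have : (t : ℝ) * c ≤ T * c := by gcongr
    linarith
  suffices drift : ∀ t ≤ T, ∀ i, δ - t * c ≤ |z t i| from
    fun t ht i => (hhalf t ht).trans (drift t ht i)
  intro t
  induction t with
  | zero => simpa using h₀
  | succ t ih =>
    intro ht i
    have hz := ih (by omega)
    have hmove := hstep t (by omega) (fun i => (hhalf t (by omega)).trans (hz i)) i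
    have := abs_sub_abs_le_abs_sub (z t i) (z (t + 1) i)
    rw [abs_sub_comm] at this
    push_cast
    linarith [hz i]

lemma sq_max_one_sup'_le {α : Type*} {s : Finset α} (hs : s.Nonempty) (f : α → ℝ) :
    max 1 (s.sup' hs f) ^ 2 ≤ max 1 (s.sup' hs fun q => f q ^ 2) := by
  rcases le_total (s.sup' hs f) 1 with h | h
  · simp [max_eq_left h]
  obtain ⟨q, hq, hfq⟩ := exists_mem_eq_sup' hs f
  rw [max_eq_right h, hfq]
  exact le_max_of_le_right (le_sup' (fun q => f q ^ 2) hq)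

open Finset Real in
theorem inner_weights_move_little_general
    (n d K : ℕ) (hn : 0 < n) (hd : 0 < d)
    (x : Fin n → Fin d → ℝ) (y : Fin n → ℝ) (c₁ : ℝ) (hc₁ : 0 < c₁)
    (F : (ℕ → ℝ) → (Fin K → ℕ → ℝ) → ℝ)
    (hF : ∀ (a : ℕ → ℝ) (b : Fin K → ℕ → ℝ), F a b =
      (1 / n) * ∑ i : Fin n,
        |(∑ k : Fin K, a (k + 1) *
            (1 / (1 + Real.exp (-((∑ j : Fin d, b k (j + 1) * x i j) + b k 0)))))
          + a 0 - y i| ^ 2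
      + (c₁ / n) * ∑ k ∈ Finset.range (K + 1), (a k) ^ 2)
    (a : ℕ → ℕ → ℝ) (b : ℕ → Fin K → ℕ → ℝ) (lam : ℝ) (hlam : 0 < lam)
    (T : ℕ) (c₅ c₆ δ : ℝ)
    (hupdate : ∀ t < T, ∀ (k : Fin K) (j : ℕ), j ≤ d →
      b (t + 1) k j = b t k j
        - lam * deriv (fun s =>
            F (a t) (Function.update (b t) k (Function.update (b t k) j s))) (b t k j))
    (hFbound : ∀ t < T, F (a t) (b t) ≤ c₅)
    (habound : ∀ t < T, ∑ k ∈ Finset.range (K + 1), (a t k) ^ 2 ≤ c₆ * n)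
    (hinit : ∀ (i : Fin n) (k : Fin K),
      δ ≤ |(∑ j : Fin d, b 0 k (j + 1) * x i j) + b 0 k 0|)
    (hsmall : (d + 1) * T * lam * 2 * Real.sqrt c₅
        * max 1 ((Finset.univ : Finset (Fin n × Fin d)).sup'
            ⟨(⟨0, hn⟩, ⟨0, hd⟩), Finset.mem_univ _⟩ fun q => |x q.1 q.2| ^ 2)
        * Real.sqrt (c₆ * n) * Real.exp (-δ / 2) ≤ δ / 2) :
    ∀ (k : Fin K) (j t : ℕ), j ≤ d → 1 ≤ t → t ≤ T →
      |b t k j - b (t - 1) k j|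
        ≤ lam * 2 * Real.sqrt c₅
          * max 1 ((Finset.univ : Finset (Fin n × Fin d)).sup'
              ⟨(⟨0, hn⟩, ⟨0, hd⟩), Finset.mem_univ _⟩ fun q => |x q.1 q.2|)
          * Real.sqrt (c₆ * n) * Real.exp (-δ / 2) := by
  have hrisk : F = penalizedRisk x y c₁ := by
    funext a b
    simp [hF, penalizedRisk, logisticNetwork, preactivation_apply, sigmoid_def]
  set M := max 1 ((univ : Finset (Fin n × Fin d)).sup' ⟨(⟨0, hn⟩, ⟨0, hd⟩), mem_univ _⟩
    fun q => |x q.1 q.2|)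
  have hM : 1 ≤ M := le_max_left _ _
  have hx : ∀ i l, |x i l| ≤ M := fun i l =>
    le_max_of_le_right (le_sup' (fun q : Fin n × Fin d => |x q.1 q.2|) (mem_univ (i, l)))
  set S := lam * 2 * √c₅ * M * √(c₆ * n) * exp (-δ / 2)
  have hstep : ∀ t < T, (∀ i k, δ / 2 ≤ |preactivation (x i) (b t k)|) →
      ∀ k j, j ≤ d → |b (t + 1) k j - b t k j| ≤ S := by
    intro t ht hz k j hj
    rw [hupdate t ht k j hj, sub_sub_cancel_left, abs_neg, hrisk]
    have := abs_mul_deriv_penalizedRisk_le hc₁.le j hlam.le hM hx (fun i => hz i k)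
      (hrisk ▸ hFbound t ht) (habound t ht)
    rwa [← neg_div] at this
  have hdrift : ∀ t < T, (∀ p : Fin n × Fin K, δ / 2 ≤ |preactivation (x p.1) (b t p.2)|) →
      ∀ p : Fin n × Fin K,
        |preactivation (x p.1) (b (t + 1) p.2) - preactivation (x p.1) (b t p.2)|
          ≤ (d + 1) * M * S := by
    intro t ht hz p
    rw [← map_sub]
    exact abs_preactivation_le hM (hx p.1) fun j hj => hstep t ht (fun i k => hz (i, k)) p.2 j hj
  have htotal : (T : ℝ) * ((d + 1) * M * S) ≤ δ / 2 := by
    have hM2 := sq_max_one_sup'_le ⟨(⟨0, hn⟩, ⟨0, hd⟩), mem_univ _⟩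
      (fun q : Fin n × Fin d => |x q.1 q.2|)
    calc (T : ℝ) * ((d + 1) * M * S)
        = (d + 1) * T * lam * 2 * √c₅ * M ^ 2 * √(c₆ * n) * exp (-δ / 2) := by ring
      _ ≤ _ := by gcongr
      _ ≤ δ / 2 := hsmall
  have haway := abs_ge_half_of_small_steps (by positivity) htotal (fun p => hinit p.1 p.2) hdrift
  intro k j t hj ht₁ htT
  obtain ⟨t, rfl⟩ : ∃ s, t = s + 1 := ⟨t - 1, by omega⟩
  simpa using hstep t (by omega) (fun i k => haway t (by omega) (i, k)) k j hj

open Finset Real in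
theorem inner_weights_move_little
    (n d K : ℕ) (hn : 0 < n) (hd : 0 < d)
    (x : Fin n → Fin d → ℝ) (y : Fin n → ℝ) (c₁ : ℝ) (hc₁ : 0 < c₁)
    (F : (ℕ → ℝ) → (Fin K → ℕ → ℝ) → ℝ)
    (hF : ∀ (a : ℕ → ℝ) (b : Fin K → ℕ → ℝ), F a b =
      (1 / n) * ∑ i : Fin n,
        |(∑ k : Fin K, a (k + 1) *
            (1 / (1 + Real.exp (-((∑ j : Fin d, b k (j + 1) * x i j) + b k 0)))))
          + a 0 - y i| ^ 2
      + (c₁ / n) * ∑ k ∈ Finset.range (K + 1), (a k) ^ 2)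
    (a : ℕ → ℕ → ℝ) (b : ℕ → Fin K → ℕ → ℝ) (lam : ℝ) (hlam : 0 < lam)
    (T : ℕ) (c₅ c₆ δ : ℝ) (hδ : 0 < δ)
    (hupdate : ∀ t < T, ∀ (k : Fin K) (j : ℕ), j ≤ d →
      b (t + 1) k j = b t k j
        - lam * deriv (fun s =>
            F (a t) (Function.update (b t) k (Function.update (b t k) j s))) (b t k j))
    (hFbound : ∀ t < T, F (a t) (b t) ≤ c₅)
    (habound : ∀ t < T, ∑ k ∈ Finset.range (K + 1), (a t k) ^ 2 ≤ c₆ * n)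
    (hinit : ∀ (i : Fin n) (k : Fin K),
      δ ≤ |(∑ j : Fin d, b 0 k (j + 1) * x i j) + b 0 k 0|)
    (hsmall : (d + 1) * T * lam * 2 * Real.sqrt c₅
        * max 1 ((Finset.univ : Finset (Fin n × Fin d)).sup'
            ⟨(⟨0, hn⟩, ⟨0, hd⟩), Finset.mem_univ _⟩ fun q => |x q.1 q.2| ^ 2)
        * Real.sqrt (c₆ * n) * Real.exp (-δ / 2) ≤ δ / 2) :
    ∀ (k : Fin K) (j t : ℕ), j ≤ d → 1 ≤ t → t ≤ T →
      |b t k j - b (t - 1) k j|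
        ≤ lam * 2 * Real.sqrt c₅
          * max 1 ((Finset.univ : Finset (Fin n × Fin d)).sup'
              ⟨(⟨0, hn⟩, ⟨0, hd⟩), Finset.mem_univ _⟩ fun q => |x q.1 q.2|)
          * Real.sqrt (c₆ * n) * Real.exp (-δ / 2) :=
  inner_weights_move_little_general n d K hn hd x y c₁ hc₁ F hF a b lam hlam T c₅ c₆ δ hupdate
    hFbound habound hinit hsmall
end
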